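/- μ({0}) = 1 − min(1 − ν({0}), c⁻¹(1 − ν̃({0}))). -/

import Mathlib

/-! On the imaginary axis `z = iy` put `F(y) = ∫ 1 / (1 + δ̃ t) dν = -z m(z)` and
`G(y) = ∫ 1 / (1 + δ t) dν̃`. The master equations give `G = 1 + c (F - 1)` and force
`Re δ, Re δ̃ ≥ 0`, while `F(y) → μ{0}` as `y → 0⁺`. Since `Re (1 / (1 + w t)) ≥ 0` when
`Re w ≥ 0`, this yields `μ{0} ≥ ν{0}` and `1 + c (μ{0} - 1) ≥ ν̃{0}`. If `δ̃(iy)` is unbounded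
as `y → 0⁺`, then along the unbounded direction `F → ν{0}`; likewise an unbounded `δ` forces
`G → ν̃{0}`. Both cannot stay bounded: the real part of the first equation reads
`∫ Re (t / (1 + δ̃ t)) dν = y Im δ / c → 0`, whereas for bounded `δ̃` the left side stays
bounded away from `0` because `ν` charges `(0, ∞)`. -/

open MeasureTheory Set Filter Topology

noncomputable section

/-- The open upper half plane of `ℂ`. -/
def UpperHalf : Set ℂ := {z : ℂ | 0 < z.im}

/-- `(d, dt)` is a solution in `ℂ₊ × ℂ₊` of the master system of equations at the point `z`. -/
def IsPair (ν νt : Measure ℝ) (c : ℝ) (z d dt : ℂ) : Prop :=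
  d ∈ UpperHalf ∧ dt ∈ UpperHalf ∧
  d = (c : ℂ) * ∫ t, (t : ℂ) / (-z * (1 + dt * (t : ℂ))) ∂ν ∧
  dt = ∫ t, (t : ℂ) / (-z * (1 + d * (t : ℂ))) ∂νt

open Complex

section Kernel

variable {w : ℂ} {t : ℝ}

lemma im_one_add_mul_ofReal (w : ℂ) (t : ℝ) : (1 + w * t).im = w.im * t := by simp

lemma one_add_mul_ofReal_ne_zero (hw : w.im ≠ 0) (t : ℝ) : 1 + w * t ≠ 0 := by
  intro h
  have h' := congrArg Complex.re h
  have him := congrArg Complex.im h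
  simp only [im_one_add_mul_ofReal, zero_im, mul_eq_zero, hw, false_or] at him
  simp [him] at h'

lemma norm_ofReal_div_one_add_mul_le (hw : w.im ≠ 0) (t : ℝ) :
    ‖(t : ℂ) / (1 + w * t)‖ ≤ |w.im|⁻¹ := by
  have hle : |w.im| * ‖(t : ℂ)‖ ≤ ‖1 + w * t‖ := by
    simpa [im_one_add_mul_ofReal, abs_mul] using abs_im_le_norm (1 + w * t)
  rw [norm_div, div_le_iff₀ (norm_pos_iff.2 (one_add_mul_ofReal_ne_zero hw t)),
    le_inv_mul_iff₀ (abs_pos.2 hw)]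
  exact hle

lemma one_le_re_one_add_mul (hw : 0 ≤ w.re) (ht : 0 ≤ t) : 1 ≤ (1 + w * t).re := by
  simpa using mul_nonneg hw ht

lemma one_le_norm_one_add_mul (hw : 0 ≤ w.re) (ht : 0 ≤ t) : 1 ≤ ‖1 + w * t‖ :=
  (one_le_re_one_add_mul hw ht).trans (re_le_norm _)

lemma norm_one_div_one_add_mul_le_one (hw : 0 ≤ w.re) (ht : 0 ≤ t) :
    ‖1 / (1 + w * t)‖ ≤ 1 := by
  rw [norm_div, norm_one]
  exact div_le_one_of_le₀ (one_le_norm_one_add_mul hw ht) (norm_nonneg _)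

lemma norm_mul_le_norm_one_add_mul (hw : 0 ≤ w.re) (ht : 0 ≤ t) : ‖w‖ * t ≤ ‖1 + w * t‖ := by
  have key : (‖w‖ * t) ^ 2 ≤ ‖1 + w * t‖ ^ 2 := by
    rw [mul_pow, Complex.sq_norm, Complex.sq_norm, normSq_apply, normSq_apply]
    simp only [add_re, one_re, mul_re, ofReal_re, ofReal_im, mul_zero, sub_zero, add_im, one_im,
      mul_im, zero_add]
    nlinarith [mul_nonneg hw ht]
  exact (pow_le_pow_iff_left₀ (by positivity) (norm_nonneg _) two_ne_zero).1 key

lemma re_one_div_one_add_mul_nonneg (hw : 0 ≤ w.re) (ht : 0 ≤ t) : 0 ≤ (1 / (1 + w * t)).re := by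
  rw [one_div, inv_re]
  exact div_nonneg (zero_le_one.trans (one_le_re_one_add_mul hw ht)) (normSq_nonneg _)

lemma im_ofReal_div_one_add_mul_nonpos (hw : 0 ≤ w.im) (t : ℝ) :
    ((t : ℂ) / (1 + w * t)).im ≤ 0 := by
  rw [div_eq_mul_inv, im_ofReal_mul, inv_im, im_one_add_mul_ofReal, mul_div_assoc', mul_neg,
    ← mul_assoc, neg_div]
  exact neg_nonpos.2 (div_nonneg (by nlinarith [sq_nonneg t]) (normSq_nonneg _))

lemma div_sq_le_re_ofReal_div_one_add_mul {M : ℝ} (hw : 0 ≤ w.re) (hwM : ‖w‖ ≤ M) (ht : 0 ≤ t) :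
    t / (1 + M * t) ^ 2 ≤ ((t : ℂ) / (1 + w * t)).re := by
  have hre := one_le_re_one_add_mul hw ht
  have hnorm : ‖1 + w * t‖ ≤ 1 + M * t := calc
    ‖1 + w * t‖ ≤ 1 + ‖w‖ * t := by
      simpa [abs_of_nonneg ht] using norm_add_le (1 : ℂ) (w * t)
    _ ≤ 1 + M * t := by gcongr
  have hpos : 0 < ‖1 + w * t‖ ^ 2 := by nlinarith [one_le_norm_one_add_mul hw ht]
  rw [div_eq_mul_inv (t : ℂ), re_ofReal_mul, inv_re, ← Complex.sq_norm, div_eq_mul_one_div t]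
  refine mul_le_mul_of_nonneg_left ?_ ht
  calc 1 / (1 + M * t) ^ 2 ≤ 1 / ‖1 + w * t‖ ^ 2 := by gcongr
    _ ≤ (1 + w * t).re / ‖1 + w * t‖ ^ 2 := by gcongr

end Kernel

section Integrals

variable {ρ : Measure ℝ} {w : ℂ}

lemma ae_nonneg_of_measure_Iio_eq_zero (h : ρ (Iio 0) = 0) : ∀ᵐ t ∂ρ, 0 ≤ t :=
  (measure_eq_zero_iff_ae_notMem.1 h).mono fun _ ht => not_lt.1 ht

lemma integrable_ofReal_div_one_add_mul [IsFiniteMeasure ρ] (hw : w.im ≠ 0) :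
    Integrable (fun t : ℝ => (t : ℂ) / (1 + w * t)) ρ :=
  (integrable_const |w.im|⁻¹).mono' (Measurable.aestronglyMeasurable (by fun_prop))
    (ae_of_all _ (norm_ofReal_div_one_add_mul_le hw))

lemma integrable_one_div_one_add_mul [IsFiniteMeasure ρ] (hρ : ∀ᵐ t ∂ρ, 0 ≤ t) (hw : 0 ≤ w.re) :
    Integrable (fun t : ℝ => 1 / (1 + w * t)) ρ :=
  (integrable_const 1).mono' (Measurable.aestronglyMeasurable (by fun_prop))
    (hρ.mono fun _ ht => norm_one_div_one_add_mul_le_one hw ht)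

lemma integral_one_div_one_add_mul [IsProbabilityMeasure ρ] (hw : w.im ≠ 0) :
    ∫ t, 1 / (1 + w * t) ∂ρ = 1 - w * ∫ t, (t : ℂ) / (1 + w * t) ∂ρ := by
  have hpt (t : ℝ) : 1 / (1 + w * t) = 1 - w * ((t : ℂ) / (1 + w * t)) := by
    field_simp [one_add_mul_ofReal_ne_zero hw t]
    ring
  simp_rw [hpt]
  rw [integral_sub (integrable_const 1) ((integrable_ofReal_div_one_add_mul hw).const_mul w),
    integral_const_mul]
  simp

lemma im_integral_ofReal_div_one_add_mul_nonpos [IsFiniteMeasure ρ] (hw : 0 < w.im) :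
    (∫ t, (t : ℂ) / (1 + w * t) ∂ρ).im ≤ 0 := by
  have := integral_im (integrable_ofReal_div_one_add_mul (ρ := ρ) hw.ne')
  simp only [RCLike.im_to_complex] at this
  rw [← this]
  exact integral_nonpos fun t => im_ofReal_div_one_add_mul_nonpos hw.le t

lemma toReal_measure_singleton_zero_le_re_integral_one_div [IsFiniteMeasure ρ] (hρ : ∀ᵐ t ∂ρ, 0 ≤ t)
    (hw : 0 ≤ w.re) : (ρ {0}).toReal ≤ (∫ t, 1 / (1 + w * t) ∂ρ).re := by
  have hint := integrable_one_div_one_add_mul hρ hw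
  have := integral_re hint
  simp only [RCLike.re_to_complex] at this
  rw [← this, ← measureReal_def, ← integral_indicator_one (measurableSet_singleton 0)]
  refine integral_mono_ae ((integrable_const 1).indicator (measurableSet_singleton 0)) hint.re ?_
  filter_upwards [hρ] with t ht
  by_cases h0 : t = 0
  · simp [h0]
  · simpa [h0] using re_one_div_one_add_mul_nonneg hw ht

lemma measure_Ioi_ne_zero_of_ne_dirac [IsProbabilityMeasure ρ] (hρ : ∀ᵐ t ∂ρ, 0 ≤ t)
    (hρ₀ : ρ ≠ Measure.dirac 0) : ρ (Ioi 0) ≠ 0 := by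
  contrapose! hρ₀
  have h0 : ∀ᵐ t ∂ρ, t ∈ ({0} : Set ℝ) := by
    filter_upwards [hρ, measure_eq_zero_iff_ae_notMem.1 hρ₀] with t ht ht'
    exact le_antisymm (not_lt.1 ht') ht
  have h := Measure.restrict_eq_self_of_ae_mem h0
  rw [Measure.restrict_singleton] at h
  have h1 : ρ {0} = 1 := by simpa using congrArg (· univ) h
  rw [← h, h1, one_smul]

end Integrals

section Limits

variable {ρ : Measure ℝ} [IsFiniteMeasure ρ]

lemma tendsto_integral_one_div_one_add_mul {α : Type*} {l : Filter α} [l.IsCountablyGenerated]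
    (hρ : ∀ᵐ t ∂ρ, 0 ≤ t) {w : α → ℂ} (hre : ∀ᶠ x in l, 0 ≤ (w x).re)
    (hw : Tendsto (fun x => ‖w x‖) l atTop) :
    Tendsto (fun x => ∫ t, 1 / (1 + w x * t) ∂ρ) l (𝓝 (ρ {0}).toReal) := by
  have hlim : ∀ᵐ (t : ℝ) ∂ρ, Tendsto (fun x => 1 / (1 + w x * t)) l
      (𝓝 (({0} : Set ℝ).indicator (fun _ => (1 : ℂ)) t)) := by
    filter_upwards [hρ] with t ht
    rcases ht.eq_or_lt with rfl | ht
    · simpa using tendsto_const_nhds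
    rw [indicator_of_notMem (by exact ht.ne'), tendsto_zero_iff_norm_tendsto_zero]
    refine squeeze_zero' (Eventually.of_forall fun _ => norm_nonneg _) ?_
      (tendsto_inv_atTop_zero.comp (hw.atTop_mul_const ht))
    filter_upwards [hre, (hw.atTop_mul_const ht).eventually_gt_atTop 0] with x hx hpos
    rw [norm_div, norm_one, one_div]
    exact inv_anti₀ hpos (norm_mul_le_norm_one_add_mul hx ht.le)
  have h := tendsto_integral_filter_of_dominated_convergence (fun _ => 1)
    (Eventually.of_forall fun _ => Measurable.aestronglyMeasurable (by fun_prop))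
    (hre.mono fun x hx => hρ.mono fun t ht => norm_one_div_one_add_mul_le_one hx ht)
    (integrable_const 1) hlim
  rwa [integral_indicator_const _ (measurableSet_singleton 0), real_smul, mul_one] at h

lemma exists_pos_le_integral_re_ofReal_div (hρ : ∀ᵐ t ∂ρ, 0 ≤ t) (hρ₀ : ρ (Ioi 0) ≠ 0) (M : ℝ) :
    ∃ κ > 0, ∀ w : ℂ, w.im ≠ 0 → 0 ≤ w.re → ‖w‖ ≤ M →
      κ ≤ ∫ t, ((t : ℂ) / (1 + w * t)).re ∂ρ := by
  set M' := max M 1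
  have hM' : 0 < M' := lt_max_of_lt_right one_pos
  set g : ℝ → ℝ := fun t => t / (1 + M' * t) ^ 2
  have hg_nonneg : 0 ≤ᵐ[ρ] g := hρ.mono fun t ht => by positivity
  have hg_int : Integrable g ρ := by
    refine (integrable_const M'⁻¹).mono' (Measurable.aestronglyMeasurable (by fun_prop)) ?_
    filter_upwards [hρ] with t ht
    rw [Real.norm_of_nonneg (by positivity), div_le_iff₀ (by positivity)]
    field_simp
    nlinarith [mul_nonneg hM'.le ht]
  refine ⟨∫ t, g t ∂ρ, ?_, fun w hw hre hwM => ?_⟩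
  · rw [gt_iff_lt, integral_pos_iff_support_of_nonneg_ae hg_nonneg hg_int]
    refine (pos_iff_ne_zero.2 hρ₀).trans_le (measure_mono fun t (ht : 0 < t) => ?_)
    exact (div_pos ht (by positivity)).ne'
  · refine integral_mono_ae hg_int (integrable_ofReal_div_one_add_mul hw).re ?_
    filter_upwards [hρ] with t ht
    exact div_sq_le_re_ofReal_div_one_add_mul hre (hwM.trans (le_max_left M 1)) ht

lemma toReal_measure_singleton_zero_le_of_tendsto_integral_one_div {α : Type*} {l : Filter α}
    [l.NeBot] (hρ : ∀ᵐ t ∂ρ, 0 ≤ t) {w : α → ℂ} (hre : ∀ᶠ x in l, 0 ≤ (w x).re)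
    {a : ℝ} (ha : Tendsto (fun x => ∫ t, 1 / (1 + w x * t) ∂ρ) l (𝓝 a)) :
    (ρ {0}).toReal ≤ a :=
  ge_of_tendsto ((continuous_re.tendsto a).comp ha)
    (hre.mono fun _ hx => toReal_measure_singleton_zero_le_re_integral_one_div hρ hx)

lemma eq_toReal_measure_singleton_zero_of_tendsto_integral_one_div {α : Type*} {l : Filter α}
    [l.IsCountablyGenerated] (hρ : ∀ᵐ t ∂ρ, 0 ≤ t) {w : α → ℂ}
    (hre : ∀ᶠ x in l, 0 ≤ (w x).re) (hw : ¬ IsBoundedUnder (· ≤ ·) l (fun x => ‖w x‖)) {a : ℂ}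
    (ha : Tendsto (fun x => ∫ t, 1 / (1 + w x * t) ∂ρ) l (𝓝 a)) : a = (ρ {0}).toReal := by
  have : (l ⊓ comap (fun x => ‖w x‖) atTop).NeBot := by
    rw [inf_comm]
    refine ((atTop_basis (α := ℝ)).comap _).inf_neBot_iff.2 fun M _ s hs => ?_
    have hfreq : ∃ᶠ x in l, M ≤ ‖w x‖ := fun h =>
      hw ⟨M, h.mono fun x hx => (not_le.1 hx).le⟩
    exact (hfreq.and_eventually hs).exists
  exact tendsto_nhds_unique (ha.mono_left inf_le_left)
    (tendsto_integral_one_div_one_add_mul hρ (hre.filter_mono inf_le_left)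
      (tendsto_comap.mono_left inf_le_right))

end Limits

lemma integral_div_mul_left {α 𝕜 : Type*} [MeasurableSpace α] [RCLike 𝕜] (μ : Measure α)
    (f g : α → 𝕜) (b : 𝕜) : ∫ x, f x / (b * g x) ∂μ = b⁻¹ * ∫ x, f x / g x ∂μ := by
  rw [← integral_const_mul]
  simp_rw [div_mul_eq_div_div_swap, div_eq_inv_mul (f _ / g _)]

lemma integral_one_div_sub (μ : Measure ℝ) {z : ℂ} (hz : z ≠ 0) :
    ∫ t, 1 / ((t : ℂ) - z) ∂μ = (-z)⁻¹ * ∫ t, 1 / (1 + (-z)⁻¹ * t) ∂μ := by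
  have h (t : ℂ) : t - z = -z * (1 + (-z)⁻¹ * t) := by
    field_simp [neg_ne_zero.2 hz]
    ring
  simp_rw [h]
  exact integral_div_mul_left μ _ _ _

lemma tendsto_neg_mul_integral_one_div_sub {μ : Measure ℝ} [IsFiniteMeasure μ]
    (hμ : ∀ᵐ t ∂μ, 0 ≤ t) :
    Tendsto (fun y : ℝ => -(y * I) * ∫ t, 1 / ((t : ℂ) - y * I) ∂μ) (𝓝[>] 0)
      (𝓝 (μ {0}).toReal) := by
  refine (tendsto_integral_one_div_one_add_mul (w := fun y : ℝ => (-(y * I))⁻¹) hμ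
    (Eventually.of_forall fun y => by simp) ?_).congr' ?_
  · refine tendsto_inv_nhdsGT_zero.congr' ?_
    filter_upwards [self_mem_nhdsWithin] with y (hy : 0 < y)
    simp [abs_of_pos hy]
  · filter_upwards [self_mem_nhdsWithin] with y (hy : 0 < y)
    have hz : -(y * I : ℂ) ≠ 0 := by simp [hy.ne']
    rw [integral_one_div_sub μ (neg_ne_zero.1 hz), ← mul_assoc, mul_inv_cancel₀ hz, one_mul]

namespace IsPair

variable {ν νt : Measure ℝ} {c : ℝ} {z d dt : ℂ}

lemma im_pos_left (h : IsPair ν νt c z d dt) : 0 < d.im := h.1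

lemma im_pos_right (h : IsPair ν νt c z d dt) : 0 < dt.im := h.2.1

lemma integral_ofReal_div_left (h : IsPair ν νt c z d dt) (hc : c ≠ 0) (hz : z ≠ 0) :
    ∫ t, (t : ℂ) / (1 + dt * t) ∂ν = -z * d / c := by
  rw [h.2.2.1, integral_div_mul_left]
  generalize ∫ t, (t : ℂ) / (1 + dt * t) ∂ν = X
  field_simp [neg_ne_zero.2 hz, ofReal_ne_zero.2 hc]

lemma integral_ofReal_div_right (h : IsPair ν νt c z d dt) (hz : z ≠ 0) :
    ∫ t, (t : ℂ) / (1 + d * t) ∂νt = -z * dt := by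
  rw [h.2.2.2, integral_div_mul_left, ← mul_assoc, mul_inv_cancel₀ (neg_ne_zero.2 hz), one_mul]

lemma integral_one_div_right [IsProbabilityMeasure ν] [IsProbabilityMeasure νt]
    (h : IsPair ν νt c z d dt) (hc : c ≠ 0) (hz : z ≠ 0) :
    ∫ t, 1 / (1 + d * t) ∂νt = 1 + c * (∫ t, 1 / (1 + dt * t) ∂ν - 1) := by
  rw [integral_one_div_one_add_mul h.im_pos_left.ne',
    integral_one_div_one_add_mul h.im_pos_right.ne',
    h.integral_ofReal_div_left hc hz, h.integral_ofReal_div_right hz]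
  field_simp [ofReal_ne_zero.2 hc]
  ring

variable {y : ℝ}

lemma re_nonneg_left [IsFiniteMeasure ν] (h : IsPair ν νt c (y * I) d dt) (hy : 0 < y)
    (hc : 0 < c) : 0 ≤ d.re := by
  have him := im_integral_ofReal_div_one_add_mul_nonpos (ρ := ν) h.im_pos_right
  rw [h.integral_ofReal_div_left hc.ne' (by simp [hy.ne'])] at him
  have hyd : 0 ≤ y * d.re / c := by simpa [neg_div] using him
  rw [le_div_iff₀ hc, zero_mul] at hyd
  exact (mul_nonneg_iff_of_pos_left hy).1 hyd

lemma re_nonneg_right [IsFiniteMeasure νt] (h : IsPair ν νt c (y * I) d dt) (hy : 0 < y) :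
    0 ≤ dt.re := by
  have him := im_integral_ofReal_div_one_add_mul_nonpos (ρ := νt) h.im_pos_left
  rw [h.integral_ofReal_div_right (by simp [hy.ne'])] at him
  have hydt : 0 ≤ y * dt.re := by simpa using him
  exact (mul_nonneg_iff_of_pos_left hy).1 hydt

lemma integral_re_ofReal_div_left [IsFiniteMeasure ν] (h : IsPair ν νt c (y * I) d dt)
    (hy : y ≠ 0) (hc : c ≠ 0) : ∫ t, ((t : ℂ) / (1 + dt * t)).re ∂ν = y * d.im / c := by
  have := integral_re (integrable_ofReal_div_one_add_mul (ρ := ν) h.im_pos_right.ne')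
  simp only [RCLike.re_to_complex] at this
  rw [this, h.integral_ofReal_div_left hc (by simp [hy])]
  simp

end IsPair

section ImaginaryAxis

variable {ν νt : Measure ℝ} [IsProbabilityMeasure ν] [IsProbabilityMeasure νt] {c : ℝ}
  {δ δt : ℂ → ℂ}

lemma eventually_re_nonneg (hc : 0 < c)
    (hpair : ∀ y : ℝ, 0 < y → IsPair ν νt c (y * I) (δ (y * I)) (δt (y * I))) :
    ∀ᶠ y : ℝ in 𝓝[>] 0, 0 ≤ (δ (y * I)).re ∧ 0 ≤ (δt (y * I)).re :=
  eventually_nhdsWithin_of_forall fun y (hy : 0 < y) =>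
    ⟨(hpair y hy).re_nonneg_left hy hc, (hpair y hy).re_nonneg_right hy⟩

lemma tendsto_integral_one_div_right (hc : c ≠ 0)
    (hpair : ∀ y : ℝ, 0 < y → IsPair ν νt c (y * I) (δ (y * I)) (δt (y * I))) {a : ℝ}
    (ha : Tendsto (fun y : ℝ => ∫ t, 1 / (1 + δt (y * I) * t) ∂ν) (𝓝[>] 0) (𝓝 a)) :
    Tendsto (fun y : ℝ => ∫ t, 1 / (1 + δ (y * I) * t) ∂νt) (𝓝[>] 0)
      (𝓝 ((1 + c * (a - 1) : ℝ) : ℂ)) := by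
  push_cast
  refine (tendsto_const_nhds.add ((ha.sub_const 1).const_mul (c : ℂ))).congr' ?_
  filter_upwards [self_mem_nhdsWithin] with y (hy : 0 < y)
  exact ((hpair y hy).integral_one_div_right hc (by simp [hy.ne'])).symm

lemma eq_or_eq_of_tendsto_integral_one_div (hν : ∀ᵐ t ∂ν, 0 ≤ t) (hνt : ∀ᵐ t ∂νt, 0 ≤ t)
    (hν₀ : ν (Ioi 0) ≠ 0) (hc : 0 < c)
    (hpair : ∀ y : ℝ, 0 < y → IsPair ν νt c (y * I) (δ (y * I)) (δt (y * I))) {a : ℝ}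
    (ha : Tendsto (fun y : ℝ => ∫ t, 1 / (1 + δt (y * I) * t) ∂ν) (𝓝[>] 0) (𝓝 a)) :
    a = (ν {0}).toReal ∨ 1 + c * (a - 1) = (νt {0}).toReal := by
  have hre := eventually_re_nonneg hc hpair
  by_contra! hne
  have hbdd_t : IsBoundedUnder (· ≤ ·) (𝓝[>] 0) fun y : ℝ => ‖δt (y * I)‖ := by
    by_contra hunb
    have := eq_toReal_measure_singleton_zero_of_tendsto_integral_one_div hν
      (hre.mono fun _ h => h.2) hunb ha
    exact hne.1 (ofReal_injective this)
  have hbdd : IsBoundedUnder (· ≤ ·) (𝓝[>] 0) fun y : ℝ => ‖δ (y * I)‖ := by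
    by_contra hunb
    have := eq_toReal_measure_singleton_zero_of_tendsto_integral_one_div hνt
      (hre.mono fun _ h => h.1) hunb
      (tendsto_integral_one_div_right hc.ne' hpair ha)
    exact hne.2 (ofReal_injective this)
  obtain ⟨M, hM⟩ := hbdd_t
  obtain ⟨κ, hκ, hκle⟩ := exists_pos_le_integral_re_ofReal_div hν hν₀ M
  have hlow : ∀ᶠ y : ℝ in 𝓝[>] 0, κ ≤ y * (δ (y * I)).im / c := by
    filter_upwards [self_mem_nhdsWithin, hre, hM] with y (hy : 0 < y) hy_re hyM
    rw [← (hpair y hy).integral_re_ofReal_div_left hy.ne' hc.ne']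
    exact hκle _ (hpair y hy).im_pos_right.ne' hy_re.2 hyM
  have hzero : Tendsto (fun y : ℝ => y * (δ (y * I)).im / c) (𝓝[>] 0) (𝓝 0) := by
    have hbdd_im : IsBoundedUnder (· ≤ ·) (𝓝[>] 0) fun y : ℝ => ‖(δ (y * I)).im‖ :=
      hbdd.mono_le (Eventually.of_forall fun y => (abs_im_le_norm _))
    simpa using (tendsto_nhdsWithin_of_tendsto_nhds tendsto_id).zero_mul_isBoundedUnder_le
      hbdd_im |>.div_const c
  obtain ⟨y, hy_low, hy_small⟩ := (hlow.and (hzero.eventually_lt_const hκ)).exists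
  exact hy_small.not_ge hy_low

end ImaginaryAxis

lemma eq_one_sub_min_of_le_of_le_of_or {a b b' c : ℝ} (hc : 0 < c) (hb : b ≤ a)
    (hb' : b' ≤ 1 + c * (a - 1)) (h : a = b ∨ 1 + c * (a - 1) = b') :
    a = 1 - min (1 - b) (c⁻¹ * (1 - b')) := by
  have hle : 1 - a ≤ c⁻¹ * (1 - b') := by
    rw [le_inv_mul_iff₀ hc]
    linarith
  rcases h with rfl | rfl
  · rw [min_eq_left hle]
    ring
  · have heq : c⁻¹ * (1 - (1 + c * (a - 1))) = 1 - a := by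
      field_simp
      ring
    rw [heq, min_eq_right (by linarith)]
    ring

theorem stmt5_general (ν νt : Measure ℝ) [IsProbabilityMeasure ν] [IsProbabilityMeasure νt]
    (hνpos : ν (Set.Iio (0 : ℝ)) = 0) (hνtpos : νt (Set.Iio (0 : ℝ)) = 0)
    (hν0 : ν ≠ Measure.dirac 0)
    (c : ℝ) (hc : 0 < c)
    (δ δt : ℂ → ℂ) (hsol : ∀ z ∈ UpperHalf, IsPair ν νt c z (δ z) (δt z))
    (μ : Measure ℝ) [IsProbabilityMeasure μ] (hμpos : μ (Set.Iio (0 : ℝ)) = 0)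
    (hμrep : ∀ z ∈ UpperHalf,
      (∫ t, 1 / ((t : ℂ) - z) ∂μ) = ∫ t, 1 / (-z * (1 + δt z * (t : ℂ))) ∂ν) :
    (μ {0}).toReal = 1 - min (1 - (ν {0}).toReal) (c⁻¹ * (1 - (νt {0}).toReal)) := by
  have hν := ae_nonneg_of_measure_Iio_eq_zero hνpos
  have hνt := ae_nonneg_of_measure_Iio_eq_zero hνtpos
  have hmem (y : ℝ) (hy : 0 < y) : (y * I : ℂ) ∈ UpperHalf := by simpa [UpperHalf] using hy
  have hpair (y : ℝ) (hy : 0 < y) := hsol _ (hmem y hy)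
  have hF : Tendsto (fun y : ℝ => ∫ t, 1 / (1 + δt (y * I) * t) ∂ν) (𝓝[>] 0)
      (𝓝 (μ {0}).toReal) := by
    refine (tendsto_neg_mul_integral_one_div_sub (ae_nonneg_of_measure_Iio_eq_zero hμpos)).congr' ?_
    filter_upwards [self_mem_nhdsWithin] with y (hy : 0 < y)
    have hz : -(y * I : ℂ) ≠ 0 := by simp [hy.ne']
    rw [hμrep _ (hmem y hy), integral_div_mul_left, ← mul_assoc, mul_inv_cancel₀ hz, one_mul]
  have hre := eventually_re_nonneg hc hpair
  refine eq_one_sub_min_of_le_of_le_of_or hc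
    (toReal_measure_singleton_zero_le_of_tendsto_integral_one_div hν (hre.mono fun _ h => h.2) hF)
    (toReal_measure_singleton_zero_le_of_tendsto_integral_one_div hνt (hre.mono fun _ h => h.1)
      (tendsto_integral_one_div_right hc.ne' hpair hF))
    (eq_or_eq_of_tendsto_integral_one_div hν hνt
      (measure_Ioi_ne_zero_of_ne_dirac hν hν0) hc hpair hF)

theorem stmt5 (ν νt : Measure ℝ) [IsProbabilityMeasure ν] [IsProbabilityMeasure νt]
    (hνpos : ν (Set.Iio (0 : ℝ)) = 0) (hνtpos : νt (Set.Iio (0 : ℝ)) = 0)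
    (hν0 : ν ≠ Measure.dirac 0) (hνt0 : νt ≠ Measure.dirac 0)
    (c : ℝ) (hc : 0 < c)
    (δ δt : ℂ → ℂ) (hsol : ∀ z ∈ UpperHalf, IsPair ν νt c z (δ z) (δt z))
    (μ : Measure ℝ) [IsProbabilityMeasure μ] (hμpos : μ (Set.Iio (0 : ℝ)) = 0)
    (hμrep : ∀ z ∈ UpperHalf,
      (∫ t, 1 / ((t : ℂ) - z) ∂μ) = ∫ t, 1 / (-z * (1 + δt z * (t : ℂ))) ∂ν) :
    (μ {0}).toReal = 1 - min (1 - (ν {0}).toReal) (c⁻¹ * (1 - (νt {0}).toReal)) :=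
  stmt5_general ν νt hνpos hνtpos hν0 c hc δ δt hsol μ hμpos hμrep
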